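/- Integration by parts on the unit circle for the pre-Schwarzian: let 0 < r < 1 and let ψ be holomorphic on the annulus {w ∈ ℂ : r < |w| < 1/r} with ψ'(w) ≠ 0 for every w with |w| = 1. Then ∫_𝕋 (w²·ψ''(w)/ψ'(w)) · |ψ'(w)|^{−2} ds(w) = ∫_𝕋 (1 + conj(w·ψ''(w)/ψ'(w))) · w · |ψ'(w)|^{−2} ds(w). -/

import Mathlib

open MeasureTheory

/-!
Put `w = e^{iθ}`. The function `θ ↦ i w / |ψ'(w)|²` is `2π`-periodic and, since
`dw/dθ = i w`, its derivative is exactly the difference of the two integrands. Hence the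
two integrals agree by the fundamental theorem of calculus.
-/

/-- The point `e^{iθ}` on the unit circle. -/
noncomputable def circpt (θ : ℝ) : ℂ := Complex.exp (θ * Complex.I)

open Complex

lemma norm_circpt (θ : ℝ) : ‖circpt θ‖ = 1 := by
  simp [circpt, Complex.norm_exp]

lemma continuous_circpt : Continuous circpt := by
  unfold circpt; fun_prop

lemma circpt_two_pi : circpt (2 * Real.pi) = circpt 0 := by
  simp [circpt, Complex.exp_two_pi_mul_I]

lemma circpt_mem_annulus {r : ℝ} (hr0 : 0 < r) (hr1 : r < 1) (θ : ℝ) :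
    circpt θ ∈ {w : ℂ | r < ‖w‖ ∧ ‖w‖ < 1 / r} := by
  exact ⟨(norm_circpt θ).symm ▸ hr1, (norm_circpt θ).symm ▸ one_lt_one_div hr0 hr1⟩

lemma hasDerivAt_circpt (θ : ℝ) : HasDerivAt circpt (circpt θ * I) θ := by
  have h := ((ofRealCLM.hasDerivAt (x := θ)).mul_const I).cexp
  simp only [ofRealCLM_apply, ofReal_one, one_mul] at h
  exact h

lemma hasDerivAt_comp_circpt {A : ℂ → ℂ} {θ : ℝ} (hA : DifferentiableAt ℂ A (circpt θ)) :
    HasDerivAt (fun t => A (circpt t)) (deriv A (circpt θ) * (circpt θ * I)) θ :=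
  hA.hasDerivAt.comp θ (hasDerivAt_circpt θ)

lemma HasDerivAt.ofReal_norm_sq {f : ℝ → ℂ} {f' : ℂ} {x : ℝ} (hf : HasDerivAt f f' x) :
    HasDerivAt (fun t => ((‖f t‖ ^ 2 : ℝ) : ℂ))
      (f' * (starRingEnd ℂ) (f x) + f x * (starRingEnd ℂ) f') x := by
  simp only [ofReal_pow, ← mul_conj']
  exact hf.mul hf.star

lemma hasDerivAt_circle_primitive {A : ℂ → ℂ} {θ : ℝ} (hA : DifferentiableAt ℂ A (circpt θ))
    (hA0 : A (circpt θ) ≠ 0) :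
    HasDerivAt (fun t => I * circpt t * ((‖A (circpt t)‖ ^ 2 : ℝ) : ℂ)⁻¹)
      (circpt θ ^ 2 * deriv A (circpt θ) / A (circpt θ) * ((‖A (circpt θ)‖ ^ 2 : ℝ) : ℂ)⁻¹
        - (1 + (starRingEnd ℂ) (circpt θ * deriv A (circpt θ) / A (circpt θ)))
          * circpt θ * ((‖A (circpt θ)‖ ^ 2 : ℝ) : ℂ)⁻¹) θ := by
  have hnorm : ((‖A (circpt θ)‖ ^ 2 : ℝ) : ℂ) ≠ 0 := by simpa using hA0
  refine (((hasDerivAt_circpt θ).const_mul I).mul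
    ((hasDerivAt_comp_circpt hA).ofReal_norm_sq.inv hnorm)).congr_deriv ?_
  have hconj : (starRingEnd ℂ) (A (circpt θ)) ≠ 0 := by simpa using hA0
  simp only [Pi.inv_apply, ofReal_pow, ← mul_conj', map_mul, map_div₀, conj_I]
  generalize circpt θ = w, deriv A (circpt θ) = b, A (circpt θ) = a at *
  field_simp
  linear_combination (w * a * (starRingEnd ℂ) a + w * a * (starRingEnd ℂ) b * (starRingEnd ℂ) w
    - w ^ 2 * (starRingEnd ℂ) a * b) * I_sq

lemma intervalIntegral.integral_eq_of_hasDerivAt_sub_of_eq {E : Type*} [NormedAddCommGroup E]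
    [NormedSpace ℝ E] [CompleteSpace E] {f g G : ℝ → E} {a b : ℝ}
    (hG : ∀ x ∈ Set.uIcc a b, HasDerivAt G (f x - g x) x) (hab : G a = G b)
    (hf : IntervalIntegrable f volume a b) (hg : IntervalIntegrable g volume a b) :
    ∫ x in a..b, f x = ∫ x in a..b, g x := by
  have := intervalIntegral.integral_eq_sub_of_hasDerivAt hG (hf.sub hg)
  rwa [intervalIntegral.integral_sub hf hg, hab, sub_self, sub_eq_zero] at this

theorem integral_preSchwarzian_circle_eq_of_analyticOnNhd {A : ℂ → ℂ} {S : Set ℂ}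
    (hA : AnalyticOnNhd ℂ A S) (hS : ∀ θ, circpt θ ∈ S) (hA0 : ∀ θ, A (circpt θ) ≠ 0) :
    (∫ θ in (0 : ℝ)..(2 * Real.pi),
      circpt θ ^ 2 * deriv A (circpt θ) / A (circpt θ) * ((‖A (circpt θ)‖ ^ 2 : ℝ) : ℂ)⁻¹) =
    ∫ θ in (0 : ℝ)..(2 * Real.pi),
      (1 + (starRingEnd ℂ) (circpt θ * deriv A (circpt θ) / A (circpt θ)))
        * circpt θ * ((‖A (circpt θ)‖ ^ 2 : ℝ) : ℂ)⁻¹ := by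
  have ha : Continuous fun θ => A (circpt θ) :=
    hA.continuousOn.comp_continuous continuous_circpt hS
  have hb : Continuous fun θ => deriv A (circpt θ) :=
    hA.deriv.continuousOn.comp_continuous continuous_circpt hS
  have hinv : Continuous fun θ => ((‖A (circpt θ)‖ ^ 2 : ℝ) : ℂ)⁻¹ :=
    (continuous_ofReal.comp (ha.norm.pow 2)).inv₀ fun θ => by simpa using hA0 θ
  have hquot : Continuous fun θ => circpt θ * deriv A (circpt θ) / A (circpt θ) :=
    (continuous_circpt.mul hb).div ha hA0
  refine intervalIntegral.integral_eq_of_hasDerivAt_sub_of_eq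
    (fun θ _ => hasDerivAt_circle_primitive (hA _ (hS θ)).differentiableAt (hA0 θ))
    (by simp only [circpt_two_pi]) ?_ ?_
  · exact (((continuous_circpt.mul hquot).mul hinv).congr fun θ => by
      simp only [Pi.mul_apply]; ring).intervalIntegrable _ _
  · exact (((continuous_const.add (continuous_conj.comp hquot)).mul continuous_circpt).mul
      hinv).intervalIntegrable _ _

/-- Integration by parts on the unit circle for the pre-Schwarzian: for `ψ` holomorphic
on the annulus `{r < |w| < 1/r}` with nonvanishing derivative on the unit circle,
`∫_𝕋 (w² ψ''/ψ')·|ψ'|^{−2} ds(w) = ∫_𝕋 (1 + conj(w ψ''/ψ'))·w·|ψ'|^{−2} ds(w)`,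
the circle integrals being parametrised by arc length via `θ ↦ e^{iθ}`. -/
theorem circle_integration_by_parts
    (r : ℝ) (hr0 : 0 < r) (hr1 : r < 1) (ψ : ℂ → ℂ)
    (hhol : DifferentiableOn ℂ ψ {w : ℂ | r < ‖w‖ ∧ ‖w‖ < 1 / r})
    (hne : ∀ w : ℂ, ‖w‖ = 1 → deriv ψ w ≠ 0) :
    (∫ θ in (0 : ℝ)..(2 * Real.pi),
      (circpt θ) ^ 2 * deriv (deriv ψ) (circpt θ) / deriv ψ (circpt θ)
        * ((‖deriv ψ (circpt θ)‖ ^ 2 : ℝ) : ℂ)⁻¹) =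
    ∫ θ in (0 : ℝ)..(2 * Real.pi),
      (1 + (starRingEnd ℂ)
          ((circpt θ) * deriv (deriv ψ) (circpt θ) / deriv ψ (circpt θ)))
        * (circpt θ) * ((‖deriv ψ (circpt θ)‖ ^ 2 : ℝ) : ℂ)⁻¹ := by
  have hopen : IsOpen {w : ℂ | r < ‖w‖ ∧ ‖w‖ < 1 / r} :=
    (isOpen_lt continuous_const continuous_norm).inter (isOpen_lt continuous_norm continuous_const)
  exact integral_preSchwarzian_circle_eq_of_analyticOnNhd (hhol.analyticOnNhd hopen).deriv
    (circpt_mem_annulus hr0 hr1) (fun θ => hne _ (norm_circpt θ))
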